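/- Let k be a commutative ring containing the rationals (a ℚ-algebra) and let B be a commutative bialgebra over k. Let r ∈ B⊗B be a finite sum r = Σᵢ xᵢ⊗yᵢ in which every xᵢ and every yᵢ is primitive, i.e. Δ(x) = x⊗1 + 1⊗x. Then the exponential F := exp(ħ·r) = Σ_{n≥0} ħⁿ·rⁿ/n! ∈ (B⊗B)[[ħ]] is a Drinfel'd twist on the power-series bialgebra B[[ħ]]: F is invertible, it is normalized in the sense that applying ε⊗id and id⊗ε coefficientwise to F gives the constant power series 1, and the 2-cocycle condition (F⊗1)·((Δ⊗id)(F)) = (1⊗F)·((id⊗Δ)(F)) holds in (B⊗B⊗B)[[ħ]], where Δ⊗id, id⊗Δ and the leg embeddings are applied coefficientwise. -/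

import Mathlib

/-!
STATEMENT 10: Over a commutative ring `k ⊇ ℚ` and a commutative bialgebra `B`, if
`r ∈ B⊗B` is a finite sum of tensors of primitive elements, then
`F := exp(ħ·r) = Σ ħⁿ rⁿ/n!` is a Drinfel'd twist on the power-series bialgebra
`B[[ħ]]`: it is invertible, normalized, and satisfies the 2-cocycle condition (with
all structure maps applied coefficientwise).
-/

open TensorProduct

noncomputable section

namespace Stmt

variable (R : Type*) [CommRing R] [Algebra ℚ R] (B : Type*) [CommRing B] [Bialgebra R B]

/-- Comultiplication as an algebra homomorphism. -/
def Δ : B →ₐ[R] B ⊗[R] B := Bialgebra.comulAlgHom R B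

/-- Counit as an algebra homomorphism. -/
def ε : B →ₐ[R] R := Bialgebra.counitAlgHom R B

/-- Leg embedding `x ↦ x₁₂` of `B ⊗ B` into `B ⊗ B ⊗ B`. -/
def ι₁₂ : B ⊗[R] B →ₐ[R] B ⊗[R] (B ⊗[R] B) :=
  Algebra.TensorProduct.map (AlgHom.id R B) Algebra.TensorProduct.includeLeft

/-- Leg embedding `x ↦ x₂₃` of `B ⊗ B` into `B ⊗ B ⊗ B`. -/
def ι₂₃ : B ⊗[R] B →ₐ[R] B ⊗[R] (B ⊗[R] B) :=
  Algebra.TensorProduct.includeRight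

/-- `Δ ⊗ id : B ⊗ B → B ⊗ B ⊗ B` (re-associated). -/
def Δ₁ : B ⊗[R] B →ₐ[R] B ⊗[R] (B ⊗[R] B) :=
  (Algebra.TensorProduct.assoc R R R B B B).toAlgHom.comp
    (Algebra.TensorProduct.map (Δ R B) (AlgHom.id R B))

/-- `id ⊗ Δ : B ⊗ B → B ⊗ B ⊗ B`. -/
def Δ₂ : B ⊗[R] B →ₐ[R] B ⊗[R] (B ⊗[R] B) :=
  Algebra.TensorProduct.map (AlgHom.id R B) (Δ R B)

/-- `ε ⊗ id : B ⊗ B → B`. -/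
def ε₁ : B ⊗[R] B →ₐ[R] B :=
  (Algebra.TensorProduct.lid R B).toAlgHom.comp
    (Algebra.TensorProduct.map (ε R B) (AlgHom.id R B))

/-- `id ⊗ ε : B ⊗ B → B`. -/
def ε₂ : B ⊗[R] B →ₐ[R] B :=
  (Algebra.TensorProduct.rid R R B).toAlgHom.comp
    (Algebra.TensorProduct.map (AlgHom.id R B) (ε R B))

/-- The formal exponential `exp(ħ·r) = Σ_{n≥0} ħⁿ · rⁿ/n!` as a power series with
coefficients in `B ⊗ B`. -/
def expF (r : B ⊗[R] B) : PowerSeries (B ⊗[R] B) :=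
  PowerSeries.mk fun n => (algebraMap ℚ R ((n.factorial : ℚ)⁻¹)) • r ^ n

/-!
Since `B` is commutative, `exp(ħ·a)` is a homomorphism from `(B⊗B, +)` to the units of
`(B⊗B)[[ħ]]`, and it commutes with every algebra map applied coefficientwise. Hence
`F` is invertible with inverse `exp(-ħ·r)`, the normalizations reduce to `(ε⊗id) r = 0 = (id⊗ε) r`
(primitive elements have counit zero), and both sides of the cocycle condition are exponentials
of `r₁₂ + (Δ⊗id) r` and `r₂₃ + (id⊗Δ) r`, which agree: for primitive `x, y` both equal
`x⊗y⊗1 + x⊗1⊗y + 1⊗x⊗y`.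
-/

section ExpSeries

variable {A A' : Type*}

def expSeries [Semiring A] [Algebra R A] (a : A) : PowerSeries A :=
  PowerSeries.mk fun n => algebraMap ℚ R ((n.factorial : ℚ)⁻¹) • a ^ n

variable {R}

@[simp]
theorem expSeries_zero [Semiring A] [Algebra R A] : expSeries R (0 : A) = 1 := by
  ext (_ | _) <;> simp [expSeries, PowerSeries.coeff_one]

theorem map_expSeries [Semiring A] [Algebra R A] [Semiring A'] [Algebra R A']
    (f : A →ₐ[R] A') (a : A) :
    PowerSeries.map (f : A →+* A') (expSeries R a) = expSeries R (f a) := by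
  ext n
  simp [expSeries, map_smul, map_pow]

variable [CommRing A] [Algebra R A]

theorem expSeries_add (a b : A) : expSeries R (a + b) = expSeries R a * expSeries R b := by
  let := Algebra.compHom A (algebraMap ℚ R)
  have h (c : A) : expSeries R c = PowerSeries.rescale c (PowerSeries.exp A) := by
    ext n
    simp [expSeries, Algebra.smul_def, mul_comm]
  rw [h, h, h, PowerSeries.exp_mul_exp_eq_exp_add]

theorem isUnit_expSeries (a : A) : IsUnit (expSeries R a) :=
  .of_mul_eq_one (expSeries R (-a)) (by rw [← expSeries_add, add_neg_cancel, expSeries_zero])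

end ExpSeries

section Primitive

variable (K : Type*) {H : Type*} [CommRing K] [Ring H] [Bialgebra K H]

def IsPrimitive (x : H) : Prop :=
  Coalgebra.comul (R := K) x = x ⊗ₜ[K] 1 + 1 ⊗ₜ[K] x

variable {K}

theorem IsPrimitive.counit_eq_zero {x : H} (hx : IsPrimitive K x) :
    Coalgebra.counit (R := K) x = 0 := by
  unfold IsPrimitive at hx
  have h := congr($(Coalgebra.lift_lsmul_comp_counit_comp_comul (R := K) (A := H)) x)
  simp only [LinearMap.comp_apply, hx, map_add, lift.tmul, LinearMap.lsmul_apply,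
    Bialgebra.counit_one, one_smul, LinearMap.id_apply, add_eq_right] at h
  simpa using congr(Coalgebra.counit (R := K) $h)

end Primitive

section Legs

variable {K H : Type*} [CommRing K] [CommRing H] [Bialgebra K H] {x y : H}

theorem ε₁_tmul_of_isPrimitive (hx : IsPrimitive K x) (y : H) : ε₁ K H (x ⊗ₜ y) = 0 := by
  simp [ε₁, ε, hx.counit_eq_zero]

theorem ε₂_tmul_of_isPrimitive (x : H) (hy : IsPrimitive K y) : ε₂ K H (x ⊗ₜ y) = 0 := by
  simp [ε₂, ε, hy.counit_eq_zero]

theorem ι₁₂_add_Δ₁_tmul_of_isPrimitive (hx : IsPrimitive K x) (hy : IsPrimitive K y) :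
    ι₁₂ K H (x ⊗ₜ y) + Δ₁ K H (x ⊗ₜ y) = ι₂₃ K H (x ⊗ₜ y) + Δ₂ K H (x ⊗ₜ y) := by
  unfold IsPrimitive at hx hy
  simp only [ι₁₂, ι₂₃, Δ₁, Δ₂, Δ, AlgHom.coe_comp, Function.comp_apply, AlgEquiv.coe_toAlgHom,
    Algebra.TensorProduct.map_tmul, AlgHom.id_apply, Algebra.TensorProduct.includeLeft_apply,
    Algebra.TensorProduct.includeRight_apply, Bialgebra.comulAlgHom_apply, hx, hy,
    add_tmul, tmul_add, map_add, Algebra.TensorProduct.assoc_tmul]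
  abel

end Legs

theorem exp_primitive_is_twist
    (r : B ⊗[R] B) (n : ℕ) (x y : Fin n → B)
    (hx : ∀ i, Coalgebra.comul (R := R) (x i) = x i ⊗ₜ[R] 1 + 1 ⊗ₜ[R] x i)
    (hy : ∀ i, Coalgebra.comul (R := R) (y i) = y i ⊗ₜ[R] 1 + 1 ⊗ₜ[R] y i)
    (hr : r = ∑ i, x i ⊗ₜ[R] y i) :
    IsUnit (expF R B r) ∧
    PowerSeries.map (ε₁ R B).toRingHom (expF R B r) = 1 ∧
    PowerSeries.map (ε₂ R B).toRingHom (expF R B r) = 1 ∧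
    PowerSeries.map (ι₁₂ R B).toRingHom (expF R B r) *
        PowerSeries.map (Δ₁ R B).toRingHom (expF R B r) =
      PowerSeries.map (ι₂₃ R B).toRingHom (expF R B r) *
        PowerSeries.map (Δ₂ R B).toRingHom (expF R B r) := by
  have hε₁ : ε₁ R B r = 0 := by
    rw [hr, map_sum]
    exact Finset.sum_eq_zero fun i _ => ε₁_tmul_of_isPrimitive (hx i) (y i)
  have hε₂ : ε₂ R B r = 0 := by
    rw [hr, map_sum]
    exact Finset.sum_eq_zero fun i _ => ε₂_tmul_of_isPrimitive (x i) (hy i)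
  have hlegs : ι₁₂ R B r + Δ₁ R B r = ι₂₃ R B r + Δ₂ R B r := by
    simp only [hr, map_sum, ← Finset.sum_add_distrib]
    exact Finset.sum_congr rfl fun i _ => ι₁₂_add_Δ₁_tmul_of_isPrimitive (hx i) (hy i)
  rw [show expF R B r = expSeries R r from rfl]
  simp only [AlgHom.toRingHom_eq_coe, map_expSeries]
  refine ⟨isUnit_expSeries r, ?_, ?_, ?_⟩
  · rw [hε₁, expSeries_zero]
  · rw [hε₂, expSeries_zero]
  · rw [← expSeries_add, ← expSeries_add, hlegs]

end Stmt
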